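/- Let X and Y be independent random variables, X exponentially distributed with mean λ_sr > 0 and Y exponentially distributed with mean λ_rd > 0, and fix s > 0. Then, as b̂ → ∞, E[ exp( −s·b̂·X²·Y ) ] ∼ π / ( 2·λ_sr·√( s·b̂·λ_rd ) ); that is, the ratio of the two sides tends to 1 as b̂ → ∞. -/

import Mathlib

/-!
Conditioning on `X`, the Laplace transform `E[exp(-t Y)] = 1 / (1 + t λ_rd)` of the exponential
law turns the left side into `∫₀^∞ f x / (1 + a x²) dx` with `a = s b̂ λ_rd` and `f` the density of
`X`. The substitution `u = √a x` rewrites `√a` times this integral as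
`∫₀^∞ f (u / √a) / (1 + u²) du`, which tends to `f 0 · π / 2 = π / (2 λ_sr)` by dominated convergence.
-/

open MeasureTheory ProbabilityTheory Real Filter Set Topology

theorem ProbabilityTheory.IndepFun.integral_comp_eq_integral_integral {Ω α β E : Type*}
    [MeasurableSpace Ω] [MeasurableSpace α] [MeasurableSpace β]
    [NormedAddCommGroup E] [NormedSpace ℝ E]
    {P : Measure Ω} [IsFiniteMeasure P] {X : Ω → α} {Y : Ω → β} (hXY : IndepFun X Y P)
    (hX : AEMeasurable X P) (hY : AEMeasurable Y P) {f : α × β → E}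
    (hf : Integrable f ((P.map X).prod (P.map Y))) :
    ∫ ω, f (X ω, Y ω) ∂P = ∫ x, ∫ y, f (x, y) ∂(P.map Y) ∂(P.map X) := by
  have hmap := (indepFun_iff_map_prod_eq_prod_map_map hX hY).mp hXY
  rw [← integral_prod f hf, ← hmap, integral_map (hX.prodMk hY)]
  exact hmap ▸ hf.aestronglyMeasurable

theorem ae_nonneg_expMeasure (r : ℝ) : ∀ᵐ y ∂expMeasure r, 0 ≤ y := by
  rw [ae_iff, expMeasure, gammaMeasure]
  simp only [not_le]
  exact (withDensity_apply _ measurableSet_Iio).trans (lintegral_gammaPDF_of_nonpos le_rfl)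

theorem integral_expMeasure {r : ℝ} (hr : 0 < r) (g : ℝ → ℝ) :
    ∫ y, g y ∂expMeasure r = ∫ y in Ioi 0, r * exp (-(r * y)) * g y := by
  rw [expMeasure, gammaMeasure, integral_withDensity_eq_integral_toReal_smul (f := gammaPDF 1 r)
      (measurable_gammaPDFReal 1 r).ennreal_ofReal (.of_forall fun _ => ENNReal.ofReal_lt_top) g,
    ← integral_Ici_eq_integral_Ioi, ← setIntegral_eq_integral_of_forall_compl_eq_zero]
  · refine setIntegral_congr_fun measurableSet_Ici fun y (hy : 0 ≤ y) => ?_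
    simp [gammaPDF, gammaPDFReal, hy, hr.le, (exp_pos _).le]
  · intro y (hy : ¬ 0 ≤ y)
    simp [gammaPDF, gammaPDFReal, hy]

theorem integral_exp_neg_mul_expMeasure {r c : ℝ} (hr : 0 < r) (hrc : 0 < r + c) :
    ∫ y, exp (-(c * y)) ∂expMeasure r = r / (r + c) := by
  have h : ∀ y, r * exp (-(r * y)) * exp (-(c * y)) = r * exp (-(r + c) * y) := fun y => by
    rw [mul_assoc, ← exp_add]; ring_nf
  simp_rw [integral_expMeasure hr, h, integral_const_mul,
    integral_exp_mul_Ioi (neg_neg_of_pos hrc) 0]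
  field_simp
  simp

theorem integral_exp_neg_mul_sq_mul_of_indepFun {Ω : Type*} [MeasurableSpace Ω] {P : Measure Ω}
    [IsFiniteMeasure P] {X Y : Ω → ℝ} (hX : Measurable X) (hY : Measurable Y)
    (hXY : IndepFun X Y P) {r c : ℝ} (hr : 0 < r) (hc : 0 ≤ c) (hYd : P.map Y = expMeasure r) :
    ∫ ω, exp (-(c * X ω ^ 2 * Y ω)) ∂P = ∫ ω, (1 + c / r * X ω ^ 2)⁻¹ ∂P := by
  have hbound : ∀ᵐ p ∂(P.map X).prod (P.map Y), ‖exp (-(c * p.1 ^ 2 * p.2))‖ ≤ 1 := by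
    rw [hYd]
    filter_upwards [Measure.quasiMeasurePreserving_snd.ae (ae_nonneg_expMeasure r)] with p hp
    rw [norm_of_nonneg (exp_pos _).le, exp_le_one_iff, neg_nonpos]
    exact mul_nonneg (by positivity) hp
  have hint : Integrable (fun p : ℝ × ℝ => exp (-(c * p.1 ^ 2 * p.2)))
      ((P.map X).prod (P.map Y)) :=
    .mono' (integrable_const 1) (by fun_prop) hbound
  have hinner (x : ℝ) : ∫ y, exp (-(c * x ^ 2 * y)) ∂P.map Y = (1 + c / r * x ^ 2)⁻¹ := by
    rw [hYd, integral_exp_neg_mul_expMeasure hr (by positivity)]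
    field_simp
  rw [hXY.integral_comp_eq_integral_integral (f := fun p => exp (-(c * p.1 ^ 2 * p.2)))
    hX.aemeasurable hY.aemeasurable hint]
  simp only [hinner]
  exact integral_map hX.aemeasurable (by fun_prop)

theorem sqrt_mul_integral_div_one_add_mul_sq {f : ℝ → ℝ} {a : ℝ} (ha : 0 < a) :
    √a * ∫ x in Ioi 0, f x / (1 + a * x ^ 2) = ∫ u in Ioi 0, f (u / √a) / (1 + u ^ 2) := by
  have hsqrt : 0 < √a := sqrt_pos.2 ha
  have hsubst (x : ℝ) : f (√a * x / √a) / (1 + (√a * x) ^ 2) = f x / (1 + a * x ^ 2) := by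
    rw [mul_div_cancel_left₀ _ hsqrt.ne', mul_pow, sq_sqrt ha.le]
  have h := integral_comp_mul_left_Ioi' (fun u => f (u / √a) / (1 + u ^ 2)) 0 hsqrt
  rw [mul_zero, smul_eq_mul] at h
  simpa only [hsubst] using h

theorem tendsto_sqrt_mul_integral_div_one_add_mul_sq {f : ℝ → ℝ} {C : ℝ} (hf : Continuous f)
    (hC : ∀ x, 0 < x → |f x| ≤ C) :
    Tendsto (fun a => √a * ∫ x in Ioi 0, f x / (1 + a * x ^ 2)) atTop (𝓝 (f 0 * (π / 2))) := by
  have hlim : Tendsto (fun a => ∫ u in Ioi 0, f (u / √a) / (1 + u ^ 2)) atTop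
      (𝓝 (∫ u in Ioi 0, f 0 / (1 + u ^ 2))) := by
    refine tendsto_integral_filter_of_dominated_convergence (fun u => C / (1 + u ^ 2))
      (.of_forall fun a =>
        ((hf.measurable.comp (by fun_prop)).div (by fun_prop)).aestronglyMeasurable) ?_ ?_ ?_
    · filter_upwards [eventually_gt_atTop 0] with a ha
      refine (ae_restrict_iff' measurableSet_Ioi).2 (.of_forall fun u hu => ?_)
      rw [norm_div, norm_of_nonneg (by positivity : (0 : ℝ) ≤ 1 + u ^ 2)]
      gcongr
      exact hC _ (div_pos hu (sqrt_pos.2 ha))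
    · simpa only [div_eq_mul_inv] using (integrable_inv_one_add_sq.const_mul C).restrict
    · refine .of_forall fun u => ((hf.tendsto 0).comp ?_).div_const _
      simpa using tendsto_const_nhds.div_atTop tendsto_sqrt_atTop
  have hval : ∫ u in Ioi (0 : ℝ), f 0 / (1 + u ^ 2) = f 0 * (π / 2) := by
    simp [div_eq_mul_inv, integral_const_mul]
  rw [hval] at hlim
  exact hlim.congr' (eventually_gt_atTop 0 |>.mono fun a ha =>
    (sqrt_mul_integral_div_one_add_mul_sq ha).symm)

/-- For independent exponential `X` (mean `λ_sr`) and `Y` (mean `λ_rd`) and fixed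
`s > 0`, as `b̂ → ∞`, `E[exp(−s·b̂·X²·Y)] ∼ π/(2·λ_sr·√(s·b̂·λ_rd))`; that is, the ratio of the
two sides tends to `1`. -/
theorem asymptotic_mgf_equiv
    {Ω : Type*} [MeasurableSpace Ω] (P : Measure Ω) [IsProbabilityMeasure P]
    (X Y : Ω → ℝ) (hX : Measurable X) (hY : Measurable Y)
    (hXY : IndepFun X Y P)
    (lsr lrd : ℝ) (hlsr : 0 < lsr) (hlrd : 0 < lrd)
    (hXd : Measure.map X P = expMeasure lsr⁻¹)
    (hYd : Measure.map Y P = expMeasure lrd⁻¹)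
    (s : ℝ) (hs : 0 < s) :
    Tendsto (fun b : ℝ =>
        (∫ ω, Real.exp (-(s * (b * X ω ^ 2 * Y ω))) ∂P) /
          (π / (2 * lsr * Real.sqrt (s * b * lrd))))
      atTop (nhds 1) := by
  set f : ℝ → ℝ := fun x => lsr⁻¹ * exp (-(lsr⁻¹ * x))
  have hmgf : ∀ b, 0 < b → ∫ ω, exp (-(s * (b * X ω ^ 2 * Y ω))) ∂P
      = ∫ x in Ioi 0, f x / (1 + s * b * lrd * x ^ 2) := fun b hb => by
    simp only [← mul_assoc]
    rw [integral_exp_neg_mul_sq_mul_of_indepFun hX hY hXY (inv_pos.2 hlrd) (by positivity) hYd,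
      ← integral_map (f := fun x => (1 + s * b / lrd⁻¹ * x ^ 2)⁻¹) hX.aemeasurable (by fun_prop),
      hXd, integral_expMeasure (inv_pos.2 hlsr)]
    simp [f, div_eq_mul_inv]
  have hf_bound : ∀ x, 0 < x → |f x| ≤ lsr⁻¹ := fun x hx => by
    rw [abs_of_pos (by positivity)]
    exact mul_le_of_le_one_right (by positivity) (exp_le_one_iff.2 (by nlinarith [inv_pos.2 hlsr]))
  have hlim := ((tendsto_sqrt_mul_integral_div_one_add_mul_sq (by fun_prop) hf_bound).comp
    ((tendsto_id.const_mul_atTop hs).atTop_mul_const hlrd)).mul_const (2 * lsr / π)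
  rw [show f 0 * (π / 2) * (2 * lsr / π) = 1 by
    simp only [f, mul_zero, neg_zero, exp_zero, mul_one]; field_simp] at hlim
  refine hlim.congr' ((eventually_gt_atTop 0).mono fun b hb => ?_)
  simp only [Function.comp_apply, id, hmgf b hb]
  field_simp
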